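/- Let G and H be finite simple graphs, and suppose G has at least one edge. Then the independence complex Ind(G[H]) of the lexicographical product G[H] is vertex decomposable if and only if Ind(G) is vertex decomposable and H is a complete graph K_m for some m ≥ 1. -/

import Mathlib

open Finset

variable {V : Type*}

/-- A facet of a collection of faces `Δ` is a maximal face. -/
def IsFacet (Δ : Set (Finset V)) (F : Finset V) : Prop :=
  F ∈ Δ ∧ ∀ G ∈ Δ, F ⊆ G → F = G

/-- A complex is pure if all facets have the same cardinality. -/
def IsPure (Δ : Set (Finset V)) : Prop :=
  ∀ F G, IsFacet Δ F → IsFacet Δ G → F.card = G.card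

/-- Deletion of a vertex from a complex. -/
def del (Δ : Set (Finset V)) (x : V) : Set (Finset V) := {F ∈ Δ | x ∉ F}

/-- Link of a vertex in a complex. -/
def link [DecidableEq V] (Δ : Set (Finset V)) (x : V) : Set (Finset V) :=
  {F ∈ Δ | x ∉ F ∧ insert x F ∈ Δ}

/-- `F : Fin s → Finset V` is a shelling order of the facets of `Δ`. -/
def IsShelling [DecidableEq V] (Δ : Set (Finset V)) {s : ℕ} (F : Fin s → Finset V) : Prop :=
  (∀ i, IsFacet Δ (F i)) ∧ (∀ G, IsFacet Δ G → ∃ i, F i = G) ∧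
  Function.Injective F ∧
  (∀ i j : Fin s, j < i → ∃ x ∈ F i \ F j, ∃ k, k < i ∧ F i \ F k = {x})

/-- A complex is shellable if it is pure and admits a shelling order of its facets. -/
def Shellable [DecidableEq V] (Δ : Set (Finset V)) : Prop :=
  IsPure Δ ∧ ∃ (s : ℕ) (F : Fin s → Finset V), IsShelling Δ F

/-- A pure complex is vertex decomposable if it is a simplex (unique facet), or some vertex
has pure, vertex decomposable deletion and link. -/
inductive VertexDecomposable [DecidableEq V] : Set (Finset V) → Prop
  | simplex (Δ : Set (Finset V)) (h : ∃! F, IsFacet Δ F) : VertexDecomposable Δ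
  | step (Δ : Set (Finset V)) (x : V)
      (hdp : IsPure (del Δ x)) (hlp : IsPure (link Δ x))
      (hd : VertexDecomposable (del Δ x)) (hl : VertexDecomposable (link Δ x)) :
      VertexDecomposable Δ

/-- The independence complex of a graph: all independent sets. -/
def indComplex (G : SimpleGraph V) : Set (Finset V) :=
  {F | ∀ v ∈ F, ∀ w ∈ F, ¬ G.Adj v w}

/-- The lexicographical product `G[H]`. -/
def lexProd {α β : Type*} (G : SimpleGraph α) (H : SimpleGraph β) :
    SimpleGraph (α × β) where
  Adj p q := G.Adj p.1 q.1 ∨ (p.1 = q.1 ∧ H.Adj p.2 q.2)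
  symm := by
    constructor
    rintro p q (h | ⟨h1, h2⟩)
    · exact Or.inl h.symm
    · exact Or.inr ⟨h1.symm, h2.symm⟩
  loopless := by
    constructor
    rintro p (h | ⟨_, h⟩)
    · exact G.loopless.irrefl _ h
    · exact H.loopless.irrefl _ h

/-- The independence number of a graph. -/
noncomputable def indepNum (G : SimpleGraph V) : ℕ :=
  sSup {n | ∃ F : Finset V, F ∈ indComplex G ∧ F.card = n}

/-- The expansion of a graph `G`, where vertex `v` is replaced by `s v` copies,
and distinct vertices `(i,j)` and `(k,l)` are adjacent iff `i ~ k` in `G` or `i = k`. -/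
def expansion (G : SimpleGraph V) (s : V → ℕ) : SimpleGraph (Σ v : V, Fin (s v)) where
  Adj p q := p ≠ q ∧ (G.Adj p.1 q.1 ∨ p.1 = q.1)
  symm := by
    constructor
    rintro p q ⟨h1, h2 | h2⟩
    · exact ⟨h1.symm, Or.inl h2.symm⟩
    · exact ⟨h1.symm, Or.inr h2.symm⟩
  loopless := by constructor; rintro p ⟨h, _⟩; exact h rfl

/-- The circulant graph `C_n(S)`: vertices `x_a`, `x_b` are adjacent iff
`|a-b| ∈ S` or `n - |a-b| ∈ S`. -/
def circulant (n : ℕ) (S : Set ℕ) : SimpleGraph (Fin n) where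
  Adj a b := a ≠ b ∧ ((max a.val b.val - min a.val b.val) ∈ S ∨
      (n - (max a.val b.val - min a.val b.val)) ∈ S)
  symm := by
    constructor
    rintro a b ⟨h1, h2⟩
    refine ⟨h1.symm, ?_⟩
    rwa [max_comm, min_comm]
  loopless := by constructor; rintro a ⟨h, _⟩; exact h rfl

/-!
If `H` is complete, an independent set of `G[H]` is an independent set `S` of `G` together with
one copy `(v, i)` of each `v ∈ S`: `Ind G[K_m]` arises from `Ind G` by replacing every vertex by
`m` mutually exclusive copies. Vertex decomposability passes both ways through this expansion:
deleting a copy `(x, i)` removes one option at `x` (or deletes `x` if it was the last one), and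
its link is the expansion of the link of `x`.

If `H` is not complete, pick non-adjacent `a ≠ b`. Purity of `Ind G[H]` forces purity of `Ind H`,
so every facet of `Ind H`, hence every fiber of a facet of `Ind G[H]`, has at least two points.
Vertex decomposable complexes are strongly connected, and a step between adjacent facets cannot
empty a fiber, so the projection to `G` only grows along a chain of facets. Hence a facet through
`(v, a)` is never joined to a facet through `(w, a)` when `vw` is an edge of `G`.
-/
section Complex

variable {Δ : Set (Finset V)} {F K L : Finset V} {x : V}

theorem isFacet_iff_maximal : IsFacet Δ F ↔ Maximal (· ∈ Δ) F :=
  ⟨fun h => ⟨h.1, fun K hK hFK => (h.2 K hK hFK).ge⟩,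
    fun h => ⟨h.1, fun _ hK hFK => le_antisymm hFK (h.2 hK hFK)⟩⟩

theorem exists_isFacet_superset [Finite V] (hF : F ∈ Δ) : ∃ K, F ⊆ K ∧ IsFacet Δ K := by
  obtain ⟨K, hFK, hK⟩ := Δ.toFinite.exists_le_maximal hF
  exact ⟨K, hFK, isFacet_iff_maximal.2 hK⟩

theorem IsPure.card_le [Finite V] (hp : IsPure Δ) (hF : F ∈ Δ) (hK : IsFacet Δ K) :
    #F ≤ #K := by
  obtain ⟨L, hFL, hL⟩ := exists_isFacet_superset hF
  exact (card_le_card hFL).trans (hp L K hL hK).le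

theorem IsPure.isFacet_of_card_eq [Finite V] (hp : IsPure Δ) (hF : F ∈ Δ) (hK : IsFacet Δ K)
    (h : #F = #K) : IsFacet Δ F :=
  ⟨hF, fun _ hL hFL => eq_of_subset_of_card_le hFL (h ▸ hp.card_le hL hK)⟩

theorem isPure_of_existsUnique (h : ∃! F, IsFacet Δ F) : IsPure Δ := fun _ _ hF hK => by
  rw [h.unique hF hK]

theorem isFacet_Iic_iff : IsFacet (Set.Iic K) F ↔ F = K :=
  ⟨fun h => h.2 K Set.self_mem_Iic h.1,
    by rintro rfl; exact ⟨Set.self_mem_Iic, fun _ hL hKL => le_antisymm hKL hL⟩⟩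

theorem isPure_Iic : IsPure (Set.Iic K) :=
  isPure_of_existsUnique ⟨K, isFacet_Iic_iff.2 rfl, fun _ h => isFacet_Iic_iff.1 h⟩

theorem eq_Iic_of_existsUnique [Finite V] (hΔ : IsLowerSet Δ) (h : ∃! F, IsFacet Δ F) :
    ∃ K, Δ = Set.Iic K := by
  obtain ⟨K, hK⟩ := h.exists
  refine ⟨K, Set.ext fun F => ⟨fun hF => ?_, fun hFK => hΔ hFK hK.1⟩⟩
  obtain ⟨L, hFL, hL⟩ := exists_isFacet_superset hF
  exact h.unique hL hK ▸ hFL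

theorem IsLowerSet.del (hΔ : IsLowerSet Δ) (x : V) : IsLowerSet (del Δ x) :=
  fun _ _ hKF hF => ⟨hΔ hKF hF.1, fun hx => hF.2 (hKF hx)⟩

theorem isFacet_del (hF : IsFacet Δ F) (hx : x ∉ F) : IsFacet (del Δ x) F :=
  ⟨⟨hF.1, hx⟩, fun K hK hFK => hF.2 K hK.1 hFK⟩

theorem isFacet_of_isFacet_del [Finite V] {B : Finset V} (hp : IsPure Δ) (hdp : IsPure (del Δ x))
    (hB : IsFacet Δ B) (hxB : x ∉ B) (hK : IsFacet (del Δ x) K) : IsFacet Δ K :=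
  hp.isFacet_of_card_eq hK.1.1 hB (hdp K B hK (isFacet_del hB hxB))

section DecidableEq

variable [DecidableEq V]

theorem IsLowerSet.link (hΔ : IsLowerSet Δ) (x : V) : IsLowerSet (link Δ x) :=
  fun _ _ hKF hF => ⟨hΔ hKF hF.1, fun hx => hF.2.1 (hKF hx), hΔ (insert_subset_insert x hKF) hF.2.2⟩

theorem del_Iic_insert (hx : x ∉ K) : del (Set.Iic (insert x K)) x = Set.Iic K := by
  ext F
  simp only [del, Set.mem_Iic, Set.mem_ofPred_eq]
  exact ⟨fun h => (subset_insert_iff_of_notMem h.2).1 h.1,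
    fun h => ⟨h.trans (subset_insert x K), fun hxF => hx (h hxF)⟩⟩

theorem link_Iic_insert (hx : x ∉ K) : link (Set.Iic (insert x K)) x = Set.Iic K := by
  ext F
  simp only [link, Set.mem_Iic, Set.mem_ofPred_eq]
  exact ⟨fun h => (subset_insert_iff_of_notMem h.2.1).1 h.1,
    fun h => ⟨h.trans (subset_insert x K), fun hxF => hx (h hxF), insert_subset_insert x h⟩⟩

theorem isFacet_insert_of_isFacet_link (hΔ : IsLowerSet Δ) (hL : IsFacet (link Δ x) L) :
    IsFacet Δ (insert x L) := by
  refine ⟨hL.1.2.2, fun K hK hLK => ?_⟩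
  have hxK : x ∈ K := hLK (mem_insert_self x L)
  have hK' : K.erase x ∈ link Δ x :=
    ⟨hΔ (erase_subset x K) hK, notMem_erase x K, by rwa [insert_erase hxK]⟩
  rw [hL.2 _ hK' (subset_erase.2 ⟨(subset_insert x L).trans hLK, hL.1.2.1⟩),
    insert_erase hxK]

theorem isFacet_link_erase (hΔ : IsLowerSet Δ) (hF : IsFacet Δ F) (hx : x ∈ F) :
    IsFacet (link Δ x) (F.erase x) := by
  refine ⟨⟨hΔ (erase_subset x F) hF.1, notMem_erase x F, by rw [insert_erase hx]; exact hF.1⟩,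
    fun L hL hFL => ?_⟩
  have hF_eq : F = insert x L := hF.2 _ hL.2.2
    ((erase_subset_iff_of_mem (mem_insert_self x L)).1 (hFL.trans (subset_insert x L)))
  rw [hF_eq, erase_insert hL.2.1]

end DecidableEq

end Complex

section StronglyConnected

variable [DecidableEq V] {Δ : Set (Finset V)} {F K : Finset V} {x : V}

/-- Facets meeting in a common ridge, or equal. -/
def AdjacentFacets (Δ : Set (Finset V)) (F K : Finset V) : Prop :=
  IsFacet Δ F ∧ IsFacet Δ K ∧ #(F \ K) ≤ 1 ∧ #(K \ F) ≤ 1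

theorem AdjacentFacets.symm (h : AdjacentFacets Δ F K) : AdjacentFacets Δ K F :=
  ⟨h.2.1, h.1, h.2.2.2, h.2.2.1⟩

def StronglyConnected (Δ : Set (Finset V)) : Prop :=
  ∀ F K, IsFacet Δ F → IsFacet Δ K → Relation.ReflTransGen (AdjacentFacets Δ) F K

theorem reflTransGen_adjacentFacets_insert (hΔ : IsLowerSet Δ) {L L' : Finset V}
    (h : Relation.ReflTransGen (AdjacentFacets (link Δ x)) L L') :
    Relation.ReflTransGen (AdjacentFacets Δ) (insert x L) (insert x L') := by
  refine h.lift _ fun L L' hL => ⟨isFacet_insert_of_isFacet_link hΔ hL.1,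
    isFacet_insert_of_isFacet_link hΔ hL.2.1, ?_, ?_⟩
  · rw [insert_sdiff_insert, sdiff_insert_of_notMem hL.1.1.2.1]
    exact hL.2.2.1
  · rw [insert_sdiff_insert, sdiff_insert_of_notMem hL.2.1.1.2.1]
    exact hL.2.2.2

theorem exists_adjacentFacets_isFacet_del [Finite V] (hΔ : IsLowerSet Δ) (hp : IsPure Δ)
    (hdel : ∀ K, IsFacet (del Δ x) K → IsFacet Δ K) (hF : IsFacet Δ F) :
    ∃ K, IsFacet (del Δ x) K ∧ AdjacentFacets Δ F K := by
  by_cases hx : x ∈ F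
  · obtain ⟨K, hFK, hK⟩ := exists_isFacet_superset (Δ := del Δ x)
      ⟨hΔ (erase_subset x F) hF.1, notMem_erase x F⟩
    have hFK' : #(F \ K) ≤ 1 := by
      calc #(F \ K) ≤ #(F \ F.erase x) := card_le_card (sdiff_subset_sdiff subset_rfl hFK)
        _ = 1 := by rw [sdiff_erase_self hx, card_singleton]
    refine ⟨K, hK, hF, hdel K hK, hFK', ?_⟩
    rwa [card_sdiff_comm (hp K F (hdel K hK) hF)]
  · exact ⟨F, isFacet_del hF hx, hF, hF, by simp, by simp⟩

theorem VertexDecomposable.stronglyConnected [Finite V] (hvd : VertexDecomposable Δ)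
    (hΔ : IsLowerSet Δ) (hp : IsPure Δ) : StronglyConnected Δ := by
  induction hvd with
  | simplex Δ h =>
    intro F K hF hK
    rw [h.unique hF hK]
  | step Δ x hdp hlp _ _ ihd ihl =>
    intro F K hF hK
    by_cases hB : ∃ B, IsFacet Δ B ∧ x ∉ B
    · obtain ⟨B, hB, hxB⟩ := hB
      have hdel := fun K => isFacet_of_isFacet_del (K := K) hp hdp hB hxB
      obtain ⟨F', hF', hFF'⟩ := exists_adjacentFacets_isFacet_del hΔ hp hdel hF
      obtain ⟨K', hK', hKK'⟩ := exists_adjacentFacets_isFacet_del hΔ hp hdel hK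
      have hmono : AdjacentFacets (del Δ x) ≤ AdjacentFacets Δ := fun L L' h =>
        ⟨hdel L h.1, hdel L' h.2.1, h.2.2⟩
      have hF'K' := Relation.ReflTransGen.mono hmono F' K' (ihd (hΔ.del x) hdp F' K' hF' hK')
      exact .head hFF' (hF'K'.tail hKK'.symm)
    · push Not at hB
      have hxF := hB F hF
      have hxK := hB K hK
      have h := reflTransGen_adjacentFacets_insert hΔ (ihl (hΔ.link x) hlp _ _
        (isFacet_link_erase hΔ hF hxF) (isFacet_link_erase hΔ hK hxK))
      rwa [insert_erase hxF, insert_erase hxK] at h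

end StronglyConnected

section Expand

variable {α β : Type*} [DecidableEq α]

/-- Vertex `v` of `Δ` is replaced by the copies `(v, i)`, `i ∈ c v`, no two of which lie in a
common face: for `c v = univ` this turns `Ind G` into `Ind G[K_m]`. -/
def expandComplex (Δ : Set (Finset α)) (c : α → Finset β) : Set (Finset (α × β)) :=
  {F | (∀ p ∈ F, p.2 ∈ c p.1) ∧ Set.InjOn Prod.fst (F : Set (α × β)) ∧ F.image Prod.fst ∈ Δ}

variable {Δ : Set (Finset α)} {c : α → Finset β} {F : Finset (α × β)} {S : Finset α}
  {f : α → β} {x : α} {i : β}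

theorem card_image_fst_of_mem_expandComplex (hF : F ∈ expandComplex Δ c) :
    #(F.image Prod.fst) = #F :=
  card_image_of_injOn hF.2.1

variable [DecidableEq β]

def graphOn (S : Finset α) (f : α → β) : Finset (α × β) := S.image fun v => (v, f v)

theorem mem_graphOn {p : α × β} : p ∈ graphOn S f ↔ p.1 ∈ S ∧ p.2 = f p.1 := by
  obtain ⟨v, j⟩ := p
  simp [graphOn, eq_comm]

theorem image_fst_graphOn : (graphOn S f).image Prod.fst = S := by
  simp [graphOn, image_image, Function.comp_def]

theorem card_graphOn : #(graphOn S f) = #S :=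
  card_image_of_injective _ fun _ _ h => congrArg Prod.fst h

theorem graphOn_mem_expandComplex (hS : S ∈ Δ) (hf : ∀ v, f v ∈ c v) :
    graphOn S f ∈ expandComplex Δ c := by
  refine ⟨fun p hp => (mem_graphOn.1 hp).2 ▸ hf p.1, fun p hp q hq h => ?_, ?_⟩
  · exact Prod.ext h (by rw [(mem_graphOn.1 hp).2, (mem_graphOn.1 hq).2, h])
  · rwa [image_fst_graphOn]

theorem insert_mem_expandComplex {u : α} {j : β} (hF : F ∈ expandComplex Δ c)
    (hu : u ∉ F.image Prod.fst) (hj : j ∈ c u) (hΔ : insert u (F.image Prod.fst) ∈ Δ) :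
    insert (u, j) F ∈ expandComplex Δ c := by
  refine ⟨?_, ?_, by rwa [image_insert]⟩
  · simpa [hj] using hF.1
  · rw [coe_insert, Set.injOn_insert fun h => hu (mem_image_of_mem _ h)]
    exact ⟨hF.2.1, fun ⟨p, hp, hpu⟩ => hu (mem_image.2 ⟨p, hp, hpu⟩)⟩

theorem isFacet_image_fst (hΔ : IsLowerSet Δ) (hc : ∀ v, (c v).Nonempty)
    (hF : IsFacet (expandComplex Δ c) F) : IsFacet Δ (F.image Prod.fst) := by
  refine ⟨hF.1.2.2, fun S hS hFS => (hFS.antisymm fun u huS => ?_)⟩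
  by_contra hu
  obtain ⟨j, hj⟩ := hc u
  have hins := insert_mem_expandComplex hF.1 hu hj (hΔ (insert_subset huS hFS) hS)
  exact hu (mem_image_of_mem Prod.fst
    ((hF.2 _ hins (subset_insert _ F)).symm ▸ mem_insert_self (u, j) F :))

theorem isFacet_graphOn (hS : IsFacet Δ S) (hf : ∀ v, f v ∈ c v) :
    IsFacet (expandComplex Δ c) (graphOn S f) := by
  refine ⟨graphOn_mem_expandComplex hS.1 hf, fun K hK hSK => ?_⟩
  have hS_eq : S = K.image Prod.fst :=
    hS.2 _ hK.2.2 (by rw [← image_fst_graphOn (S := S) (f := f)]; exact image_subset_image hSK)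
  refine eq_of_subset_of_card_le hSK ?_
  rw [← card_image_fst_of_mem_expandComplex hK, ← hS_eq, card_graphOn]

theorem IsPure.expandComplex (hp : IsPure Δ) (hΔ : IsLowerSet Δ) (hc : ∀ v, (c v).Nonempty) :
    IsPure (_root_.expandComplex Δ c) := by
  intro F K hF hK
  rw [← card_image_fst_of_mem_expandComplex hF.1, ← card_image_fst_of_mem_expandComplex hK.1]
  exact hp _ _ (isFacet_image_fst hΔ hc hF) (isFacet_image_fst hΔ hc hK)

theorem IsPure.of_expandComplex (hp : IsPure (_root_.expandComplex Δ c))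
    (hc : ∀ v, (c v).Nonempty) : IsPure Δ := by
  obtain ⟨f, hf⟩ := Classical.skolem.1 hc
  intro S S' hS hS'
  simpa only [card_graphOn] using hp _ _ (isFacet_graphOn hS hf) (isFacet_graphOn hS' hf)

end Expand

section ExpandVertexDecomposable

variable {α β : Type*} [DecidableEq α] {Δ : Set (Finset α)} {c : α → Finset β}
  {x : α} {i : β}

theorem expandComplex_update_empty :
    expandComplex Δ (Function.update c x ∅) = expandComplex (del Δ x) c := by
  have key : ∀ p : α × β, p.2 ∈ Function.update c x ∅ p.1 ↔ p.1 ≠ x ∧ p.2 ∈ c p.1 := by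
    rintro ⟨v, j⟩
    by_cases hv : v = x
    · subst hv; simp
    · simp [hv]
  ext F
  simp only [del, expandComplex, Set.mem_ofPred_eq, key, mem_image, not_exists, not_and]
  constructor
  · rintro ⟨h1, h2, h3⟩
    exact ⟨fun p hp => (h1 p hp).2, h2, h3, fun p hp => (h1 p hp).1⟩
  · rintro ⟨h1, h2, h3, h4⟩
    exact ⟨fun p hp => ⟨h4 p hp, h1 p hp⟩, h2, h3⟩

variable [DecidableEq β]

theorem del_expandComplex :
    del (expandComplex Δ c) (x, i) = expandComplex Δ (Function.update c x ((c x).erase i)) := by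
  have key : ∀ p : α × β,
      p.2 ∈ Function.update c x ((c x).erase i) p.1 ↔ p ≠ (x, i) ∧ p.2 ∈ c p.1 := by
    rintro ⟨v, j⟩
    by_cases hv : v = x
    · subst hv; simp
    · simp [hv]
  ext F
  simp only [del, expandComplex, Set.mem_ofPred_eq, key]
  constructor
  · rintro ⟨⟨h1, h2, h3⟩, h4⟩
    exact ⟨fun p hp => ⟨fun h => h4 (h ▸ hp), h1 p hp⟩, h2, h3⟩
  · rintro ⟨h1, h2, h3⟩
    exact ⟨⟨fun p hp => (h1 p hp).2, h2, h3⟩, fun h => (h1 _ h).1 rfl⟩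

theorem link_expandComplex (hi : i ∈ c x) :
    link (expandComplex Δ c) (x, i) = expandComplex (link Δ x) c := by
  ext F
  constructor
  · rintro ⟨hF, hxi, hins⟩
    have hx : x ∉ F.image Prod.fst := fun h => by
      obtain ⟨p, hp, hpx⟩ := mem_image.1 h
      exact hxi (hins.2.1 (mem_insert_of_mem hp) (mem_insert_self _ F) hpx ▸ hp)
    exact ⟨hF.1, hF.2.1, hF.2.2, hx, image_insert Prod.fst (x, i) F ▸ hins.2.2⟩
  · rintro ⟨h1, h2, h3, hx, h4⟩
    exact ⟨⟨h1, h2, h3⟩, fun h => hx (mem_image_of_mem Prod.fst h),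
      insert_mem_expandComplex ⟨h1, h2, h3⟩ hx hi h4⟩

theorem vertexDecomposable_expandComplex_of_del_link (x : α) (hΔ : IsLowerSet Δ)
    (hp : IsPure Δ) (hdp : IsPure (del Δ x)) (hlp : IsPure (link Δ x))
    (hd : ∀ c : α → Finset β, (∀ v, (c v).Nonempty) →
      VertexDecomposable (expandComplex (del Δ x) c))
    (hl : ∀ c : α → Finset β, (∀ v, (c v).Nonempty) →
      VertexDecomposable (expandComplex (link Δ x) c))
    (c : α → Finset β) (hc : ∀ v, (c v).Nonempty) : VertexDecomposable (expandComplex Δ c) := by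
  induction h : #(c x) using Nat.strong_induction_on generalizing c with
  | _ n ih =>
  obtain ⟨i, hi⟩ := hc x
  have hdel : IsPure (del (expandComplex Δ c) (x, i)) ∧
      VertexDecomposable (del (expandComplex Δ c) (x, i)) := by
    rw [del_expandComplex]
    by_cases hne : ((c x).erase i).Nonempty
    · have hc' : ∀ v, (Function.update c x ((c x).erase i) v).Nonempty :=
        (Function.forall_update_iff c fun _ s => s.Nonempty).2 ⟨hne, fun v _ => hc v⟩
      refine ⟨hp.expandComplex hΔ hc', ih _ ?_ _ hc' rfl⟩
      rw [Function.update_self, card_erase_of_mem hi, ← h]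
      exact Nat.sub_lt (card_pos.2 ⟨i, hi⟩) one_pos
    · rw [not_nonempty_iff_eq_empty.1 hne, expandComplex_update_empty]
      exact ⟨hdp.expandComplex (hΔ.del x) hc, hd c hc⟩
  have hlink := link_expandComplex (Δ := Δ) hi
  exact .step _ (x, i) hdel.1 (hlink ▸ hlp.expandComplex (hΔ.link x) hc) hdel.2 (hlink ▸ hl c hc)

theorem vertexDecomposable_expandComplex_Iic (S : Finset α) (c : α → Finset β)
    (hc : ∀ v, (c v).Nonempty) : VertexDecomposable (expandComplex (Set.Iic S) c) := by
  induction S using Finset.induction_on generalizing c with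
  | empty =>
    have h0 : ∀ F ∈ expandComplex (Set.Iic ∅) c, F = ∅ := fun F hF =>
      image_eq_empty.1 (subset_empty.1 hF.2.2)
    have hmem : ∅ ∈ expandComplex (Set.Iic (∅ : Finset α)) c := ⟨by simp, by simp, by simp⟩
    exact .simplex _ ⟨∅, ⟨hmem, fun K hK _ => (h0 K hK).symm⟩, fun F hF => h0 F hF.1⟩
  | insert x S hx ih =>
    refine vertexDecomposable_expandComplex_of_del_link x (isLowerSet_Iic _) isPure_Iic ?_ ?_ ?_ ?_
      c hc
    · rw [del_Iic_insert hx]; exact isPure_Iic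
    · rw [link_Iic_insert hx]; exact isPure_Iic
    · rw [del_Iic_insert hx]; exact ih
    · rw [link_Iic_insert hx]; exact ih

theorem VertexDecomposable.expandComplex [Finite α] (hvd : VertexDecomposable Δ)
    (hΔ : IsLowerSet Δ) (hp : IsPure Δ) (c : α → Finset β) (hc : ∀ v, (c v).Nonempty) :
    VertexDecomposable (_root_.expandComplex Δ c) := by
  induction hvd generalizing c with
  | simplex Δ h =>
    -- the expansion of a simplex is no simplex: it is decomposed one vertex of `S` at a time
    obtain ⟨S, rfl⟩ := eq_Iic_of_existsUnique hΔ h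
    exact vertexDecomposable_expandComplex_Iic S c hc
  | step Δ x hdp hlp _ _ ihd ihl =>
    exact vertexDecomposable_expandComplex_of_del_link x hΔ hp hdp hlp (ihd (hΔ.del x) hdp)
      (ihl (hΔ.link x) hlp) c hc

theorem VertexDecomposable.of_expandComplex (hvd : VertexDecomposable (_root_.expandComplex Δ c))
    (hΔ : IsLowerSet Δ) (hc : ∀ v, (c v).Nonempty) : VertexDecomposable Δ := by
  generalize hE : _root_.expandComplex Δ c = E at hvd
  induction hvd generalizing Δ c with
  | simplex E h =>
    subst hE
    obtain ⟨F, hF, huniq⟩ := h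
    obtain ⟨f, hf⟩ := Classical.skolem.1 hc
    refine .simplex _ ⟨F.image Prod.fst, isFacet_image_fst hΔ hc hF, fun S hS => ?_⟩
    rw [← huniq _ (isFacet_graphOn hS hf), image_fst_graphOn]
  | step E p hdp hlp _ _ ihd ihl =>
    subst hE
    obtain ⟨x, i⟩ := p
    by_cases hne : ((c x).erase i).Nonempty
    · have hc' : ∀ v, (Function.update c x ((c x).erase i) v).Nonempty :=
        (Function.forall_update_iff c fun _ s => s.Nonempty).2 ⟨hne, fun v _ => hc v⟩
      exact ihd hΔ hc' del_expandComplex.symm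
    · have hdel : del (_root_.expandComplex Δ c) (x, i) = _root_.expandComplex (del Δ x) c := by
        rw [del_expandComplex, not_nonempty_iff_eq_empty.1 hne, expandComplex_update_empty]
      have hi : i ∈ c x := by
        rcases (erase_eq_empty_iff _ _).1 (not_nonempty_iff_eq_empty.1 hne) with h | h
        · exact absurd h (hc x).ne_empty
        · exact h ▸ mem_singleton_self i
      have hlink := link_expandComplex (Δ := Δ) hi
      exact .step _ x ((hdel ▸ hdp).of_expandComplex hc) ((hlink ▸ hlp).of_expandComplex hc)
        (ihd (hΔ.del x) hc hdel.symm) (ihl (hΔ.link x) hc hlink.symm)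

end ExpandVertexDecomposable

section IndependenceComplex

variable {G : SimpleGraph V} {F : Finset V} {v : V}

theorem isLowerSet_indComplex (G : SimpleGraph V) : IsLowerSet (indComplex G) :=
  fun _ _ hKF hF _ hv _ hw => hF _ (hKF hv) _ (hKF hw)

theorem singleton_mem_indComplex (G : SimpleGraph V) (v : V) : {v} ∈ indComplex G := by
  simp [indComplex]

theorem nonempty_of_isFacet_indComplex [Nonempty V] (hF : IsFacet (indComplex G) F) :
    F.Nonempty := by
  rw [nonempty_iff_ne_empty]
  rintro rfl
  exact singleton_ne_empty _
    (hF.2 _ (singleton_mem_indComplex G (Classical.arbitrary V)) (empty_subset _)).symm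

variable [DecidableEq V]

theorem insert_mem_indComplex (hF : F ∈ indComplex G) (h : ∀ w ∈ F, ¬G.Adj v w) :
    insert v F ∈ indComplex G := by
  intro a ha b hb
  rcases mem_insert.1 ha with rfl | ha <;> rcases mem_insert.1 hb with hb | hb
  · rw [hb]; exact G.loopless.irrefl a
  · exact h b hb
  · rw [hb]; exact fun hab => h a ha hab.symm
  · exact hF a ha b hb

theorem mem_of_isFacet_indComplex (hF : IsFacet (indComplex G) F) (h : ∀ w ∈ F, ¬G.Adj v w) :
    v ∈ F :=
  hF.2 _ (insert_mem_indComplex hF.1 h) (subset_insert v F) ▸ mem_insert_self v F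

end IndependenceComplex

section LexProd

variable {α β : Type*} {G : SimpleGraph α} {H : SimpleGraph β}
  {F F' : Finset (α × β)} {S : Finset α} {M : α → Finset β} {u : α}

noncomputable def fiber (F : Finset (α × β)) (u : α) : Finset β :=
  F.preimage (Prod.mk u) (Prod.mk_right_injective u).injOn

theorem mem_fiber {y : β} : y ∈ fiber F u ↔ (u, y) ∈ F := mem_preimage

def fiberUnion (S : Finset α) (M : α → Finset β) : Finset (α × β) :=
  (S.sigma M).map (Equiv.sigmaEquivProd α β).toEmbedding

theorem mem_fiberUnion {p : α × β} : p ∈ fiberUnion S M ↔ p.1 ∈ S ∧ p.2 ∈ M p.1 := by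
  simp [fiberUnion, mem_map_equiv]

theorem card_fiberUnion : #(fiberUnion S M) = ∑ v ∈ S, #(M v) := by
  rw [fiberUnion, card_map, card_sigma]

variable [DecidableEq α] [DecidableEq β]

theorem indComplex_lexProd_top [Fintype β] :
    indComplex (lexProd G ⊤) = expandComplex (indComplex G) fun _ => (univ : Finset β) := by
  ext F
  constructor
  · intro h
    refine ⟨fun _ _ => mem_univ _, fun p hp q hq hpq => ?_, fun v hv w hw hvw => ?_⟩
    · by_contra hne
      exact h p hp q hq (Or.inr ⟨hpq, fun h2 => hne (Prod.ext hpq h2)⟩)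
    · obtain ⟨p, hp, rfl⟩ := mem_image.1 hv
      obtain ⟨q, hq, rfl⟩ := mem_image.1 hw
      exact h p hp q hq (Or.inl hvw)
  · rintro ⟨-, hinj, hind⟩ p hp q hq (hpq | ⟨h1, h2⟩)
    · exact hind _ (mem_image_of_mem _ hp) _ (mem_image_of_mem _ hq) hpq
    · exact h2.ne (congrArg Prod.snd (hinj hp hq h1))

theorem isFacet_fiber (hF : IsFacet (indComplex (lexProd G H)) F) (hu : u ∈ F.image Prod.fst) :
    IsFacet (indComplex H) (fiber F u) := by
  refine ⟨fun y hy z hz hyz => hF.1 _ (mem_fiber.1 hy) _ (mem_fiber.1 hz) (Or.inr ⟨rfl, hyz⟩),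
    fun N hN hFN => hFN.antisymm fun z hz => mem_fiber.2 (mem_of_isFacet_indComplex hF ?_)⟩
  obtain ⟨p, hp, rfl⟩ := mem_image.1 hu
  rintro q hq (hpq | ⟨h1, h2⟩)
  · exact hF.1 p hp q hq (Or.inl hpq)
  · exact hN z hz q.2 (hFN (mem_fiber.2 (by rwa [h1]))) h2

theorem isFacet_fiberUnion [Nonempty β] (hS : IsFacet (indComplex G) S)
    (hM : ∀ v, IsFacet (indComplex H) (M v)) :
    IsFacet (indComplex (lexProd G H)) (fiberUnion S M) := by
  refine ⟨fun p hp q hq => ?_, fun K hK hSK => hSK.antisymm fun p hp => ?_⟩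
  · rw [mem_fiberUnion] at hp hq
    rintro (hpq | ⟨h1, h2⟩)
    · exact hS.1 _ hp.1 _ hq.1 hpq
    · exact (hM p.1).1 _ hp.2 _ (h1 ▸ hq.2) h2
  have hpS : p.1 ∈ S := mem_of_isFacet_indComplex hS fun w hw hpw => by
    obtain ⟨y, hy⟩ := nonempty_of_isFacet_indComplex (hM w)
    exact hK p hp (w, y) (hSK (mem_fiberUnion.2 ⟨hw, hy⟩)) (Or.inl hpw)
  refine mem_fiberUnion.2 ⟨hpS, mem_of_isFacet_indComplex (hM p.1) fun z hz hpz => ?_⟩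
  exact hK p hp (p.1, z) (hSK (mem_fiberUnion.2 ⟨hpS, hz⟩)) (Or.inr ⟨rfl, hpz⟩)

/-- Any facet of `H` can be placed as the fiber over a fixed vertex of a fixed facet of `G`. -/
theorem IsPure.of_indComplex_lexProd [Fintype α] [Fintype β] [Nonempty α] [Nonempty β]
    (hp : IsPure (indComplex (lexProd G H))) : IsPure (indComplex H) := by
  intro N N' hN hN'
  obtain ⟨D, -, hD⟩ := exists_isFacet_superset ((isLowerSet_indComplex H) (empty_subset N) hN.1)
  obtain ⟨v₀⟩ := ‹Nonempty α›
  obtain ⟨S, hv₀, hS⟩ := exists_isFacet_superset (singleton_mem_indComplex G v₀)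
  rw [singleton_subset_iff] at hv₀
  have hfacet : ∀ N, IsFacet (indComplex H) N →
      IsFacet (indComplex (lexProd G H)) (fiberUnion S (Function.update (fun _ => D) v₀ N)) :=
    fun N hN => isFacet_fiberUnion hS
      ((Function.forall_update_iff _ fun _ s => IsFacet _ s).2 ⟨hN, fun _ _ => hD⟩)
  have hcard : ∀ N,
      #(fiberUnion S (Function.update (fun _ => D) v₀ N)) = #N + ∑ v ∈ S.erase v₀, #D := by
    intro N
    rw [card_fiberUnion, ← add_sum_erase S _ hv₀, Function.update_self]
    congr 1
    exact sum_congr rfl fun v hv => by rw [Function.update_of_ne (ne_of_mem_erase hv)]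
  have h := hp _ _ (hfacet N hN) (hfacet N' hN')
  rw [hcard, hcard] at h
  exact Nat.add_right_cancel h

/-- A step between adjacent facets removes at most one point, which cannot empty a fiber with
two or more points. -/
theorem image_fst_subset_of_adjacentFacets (h2 : ∀ N, IsFacet (indComplex H) N → 2 ≤ #N)
    (h : AdjacentFacets (indComplex (lexProd G H)) F F') :
    F.image Prod.fst ⊆ F'.image Prod.fst := by
  intro u hu
  obtain ⟨y, hy, z, hz, hyz⟩ := one_lt_card.1 (h2 _ (isFacet_fiber h.1 hu))
  by_contra hu'
  have hsdiff : ∀ w ∈ fiber F u, (u, w) ∈ F \ F' := fun w hw =>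
    mem_sdiff.2 ⟨mem_fiber.1 hw, fun h' => hu' (mem_image_of_mem Prod.fst h')⟩
  exact hyz (congrArg Prod.snd (card_le_one.1 h.2.2.1 _ (hsdiff y hy) _ (hsdiff z hz)))

theorem image_fst_subset_of_reflTransGen (h2 : ∀ N, IsFacet (indComplex H) N → 2 ≤ #N)
    (h : Relation.ReflTransGen (AdjacentFacets (indComplex (lexProd G H))) F F') :
    F.image Prod.fst ⊆ F'.image Prod.fst := by
  induction h with
  | refl => exact Subset.rfl
  | tail _ hstep ih => exact ih.trans (image_fst_subset_of_adjacentFacets h2 hstep)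

theorem eq_top_of_vertexDecomposable_indComplex_lexProd [Fintype α] [Fintype β] [Nonempty β]
    (hG : ∃ v w, G.Adj v w) (hp : IsPure (indComplex (lexProd G H)))
    (hvd : VertexDecomposable (indComplex (lexProd G H))) : H = ⊤ := by
  obtain ⟨v, w, hvw⟩ := hG
  have : Nonempty α := ⟨v⟩
  by_contra hH
  obtain ⟨a, b, hab, hnadj⟩ := SimpleGraph.ne_top_iff_exists_not_adj.1 hH
  obtain ⟨N₀, habN₀, hN₀⟩ := exists_isFacet_superset
    (insert_mem_indComplex (singleton_mem_indComplex H b) (by simpa using hnadj))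
  have h2 : ∀ N, IsFacet (indComplex H) N → 2 ≤ #N := fun N hN =>
    hp.of_indComplex_lexProd N N₀ hN hN₀ ▸ card_pair hab ▸ card_le_card habN₀
  obtain ⟨F, hvF, hF⟩ := exists_isFacet_superset (singleton_mem_indComplex (lexProd G H) (v, a))
  obtain ⟨F', hwF', hF'⟩ := exists_isFacet_superset (singleton_mem_indComplex (lexProd G H) (w, a))
  have hsub := image_fst_subset_of_reflTransGen h2
    (hvd.stronglyConnected (isLowerSet_indComplex _) hp F F' hF hF')
  obtain ⟨p, hp', hpv⟩ :=
    mem_image.1 (hsub (mem_image_of_mem Prod.fst (singleton_subset_iff.1 hvF)))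
  exact hF'.1 p hp' (w, a) (singleton_subset_iff.1 hwF') (Or.inl (hpv ▸ hvw))

end LexProd

theorem exists_iso_top_fin_iff_eq_top {β : Type*} [Fintype β] [Nonempty β] {H : SimpleGraph β} :
    (∃ m : ℕ, 1 ≤ m ∧ Nonempty (H ≃g (⊤ : SimpleGraph (Fin m)))) ↔ H = ⊤ := by
  constructor
  · rintro ⟨m, -, ⟨e⟩⟩
    ext a b
    rw [← e.map_adj_iff, SimpleGraph.top_adj, SimpleGraph.top_adj, e.injective.ne_iff]
  · rintro rfl
    exact ⟨Fintype.card β, Fintype.card_pos, ⟨SimpleGraph.Iso.completeGraph (Fintype.equivFin β)⟩⟩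

theorem stmt2 {α β : Type*} [Fintype α] [Fintype β] [DecidableEq α] [DecidableEq β]
    [Nonempty β] (G : SimpleGraph α) (H : SimpleGraph β)
    (hG : ∃ v w, G.Adj v w) :
    (IsPure (indComplex (lexProd G H)) ∧ VertexDecomposable (indComplex (lexProd G H))) ↔
      ((IsPure (indComplex G) ∧ VertexDecomposable (indComplex G)) ∧
        ∃ m : ℕ, 1 ≤ m ∧ Nonempty (H ≃g (⊤ : SimpleGraph (Fin m)))) := by
  have hc : ∀ _ : α, (univ : Finset β).Nonempty := fun _ => univ_nonempty
  have hΔ := isLowerSet_indComplex G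
  rw [exists_iso_top_fin_iff_eq_top]
  constructor
  · rintro ⟨hp, hvd⟩
    obtain rfl := eq_top_of_vertexDecomposable_indComplex_lexProd hG hp hvd
    rw [indComplex_lexProd_top] at hp hvd
    exact ⟨⟨hp.of_expandComplex hc, hvd.of_expandComplex hΔ hc⟩, rfl⟩
  · rintro ⟨⟨hp, hvd⟩, rfl⟩
    rw [indComplex_lexProd_top]
    exact ⟨hp.expandComplex hΔ hc, hvd.expandComplex hΔ hp _ hc⟩
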